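/- Let s : L → L' be a strict contraction and S = [[I_{L'}, s],[s*, I_L]]. Then ⟨S⁻¹(ℓ' ⊕ ℓ), ℓ' ⊕ ℓ⟩ ≥ ‖ℓ‖² and ⟨S⁻¹(ℓ' ⊕ ℓ), ℓ' ⊕ ℓ⟩ ≥ ‖ℓ'‖² for all ℓ ∈ L, ℓ' ∈ L'. -/

import Mathlib

open scoped InnerProductSpace ComplexOrder

/-- The block operator `S = [[I, s],[s*, I]]` on the Hilbert-space direct sum `L' ⊕ L`,
acting by `S(ℓ' ⊕ ℓ) = (ℓ' + sℓ) ⊕ (s*ℓ' + ℓ)`. -/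
noncomputable def blockOp (L L' : Type*) [NormedAddCommGroup L] [InnerProductSpace ℂ L]
    [CompleteSpace L] [NormedAddCommGroup L'] [InnerProductSpace ℂ L'] [CompleteSpace L']
    (s : L →L[ℂ] L') : WithLp 2 (L' × L) →L[ℂ] WithLp 2 (L' × L) :=
  letI e := WithLp.prodContinuousLinearEquiv 2 ℂ L' L
  (e.symm.toContinuousLinearMap) ∘L
    (((ContinuousLinearMap.fst ℂ L' L + s ∘L ContinuousLinearMap.snd ℂ L' L).prod
      ((ContinuousLinearMap.adjoint s) ∘L ContinuousLinearMap.fst ℂ L' L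
        + ContinuousLinearMap.snd ℂ L' L)) ∘L e.toContinuousLinearMap)

/-!
Write `y = S⁻¹(ℓ' ⊕ ℓ) = a ⊕ b`, so that `ℓ' = a + s b` and `ℓ = s* a + b`. Expanding,
`⟨y, S y⟩ = ‖a‖² + ‖b‖² + 2 Re ⟨a, s b⟩ = ‖ℓ‖² + (‖a‖² - ‖s* a‖²) = ‖ℓ'‖² + (‖b‖² - ‖s b‖²)`,
and both brackets are nonnegative because `s` and `s*` are contractions. The inverse exists by
the Neumann series, since `S - 1 = [[0, s], [s*, 0]]` has norm at most `‖s‖ < 1`.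
-/

open ContinuousLinearMap

theorem norm_apply_sq_le_of_opNorm_le_one {𝕜 E F : Type*} [NontriviallyNormedField 𝕜]
    [SeminormedAddCommGroup E] [SeminormedAddCommGroup F] [NormedSpace 𝕜 E] [NormedSpace 𝕜 F]
    {T : E →L[𝕜] F} (hT : ‖T‖ ≤ 1) (x : E) : ‖T x‖ ^ 2 ≤ ‖x‖ ^ 2 := by
  gcongr
  simpa using T.le_of_opNorm_le hT x

section InnerIdentities

variable {𝕜 E F : Type*} [RCLike 𝕜] [NormedAddCommGroup E] [InnerProductSpace 𝕜 E]
  [CompleteSpace E] [NormedAddCommGroup F] [InnerProductSpace 𝕜 F] [CompleteSpace F]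

theorem inner_add_inner_adjoint_eq_norm_adjoint_apply_add_sq (T : E →L[𝕜] F) (a : F) (b : E) :
    ⟪a, a + T b⟫_𝕜 + ⟪b, adjoint T a + b⟫_𝕜 =
      (‖adjoint T a + b‖ : 𝕜) ^ 2 + ((‖a‖ ^ 2 - ‖adjoint T a‖ ^ 2 : ℝ) : 𝕜) := by
  simp only [← inner_self_eq_norm_sq_to_K, inner_add_left, inner_add_right, adjoint_inner_left,
    RCLike.ofReal_sub, RCLike.ofReal_pow]
  ring

theorem inner_add_inner_adjoint_eq_norm_add_apply_sq (T : E →L[𝕜] F) (a : F) (b : E) :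
    ⟪a, a + T b⟫_𝕜 + ⟪b, adjoint T a + b⟫_𝕜 =
      (‖a + T b‖ : 𝕜) ^ 2 + ((‖b‖ ^ 2 - ‖T b‖ ^ 2 : ℝ) : 𝕜) := by
  simp only [← inner_self_eq_norm_sq_to_K, inner_add_left, inner_add_right, adjoint_inner_right,
    RCLike.ofReal_sub, RCLike.ofReal_pow]
  ring

end InnerIdentities

section BlockOp

variable {L L' : Type*} [NormedAddCommGroup L] [InnerProductSpace ℂ L] [CompleteSpace L]
  [NormedAddCommGroup L'] [InnerProductSpace ℂ L'] [CompleteSpace L'] (s : L →L[ℂ] L')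

theorem blockOp_apply (y : WithLp 2 (L' × L)) :
    blockOp L L' s y = WithLp.toLp 2 (y.fst + s y.snd, adjoint s y.fst + y.snd) :=
  rfl

theorem inner_blockOp_apply (y : WithLp 2 (L' × L)) :
    ⟪y, blockOp L L' s y⟫_ℂ = ⟪y.fst, y.fst + s y.snd⟫_ℂ + ⟪y.snd, adjoint s y.fst + y.snd⟫_ℂ :=
  WithLp.prod_inner_apply _ _

variable {s}

theorem norm_snd_blockOp_apply_sq_le_inner (hs : ‖s‖ ≤ 1) (y : WithLp 2 (L' × L)) :
    (‖(blockOp L L' s y).snd‖ : ℂ) ^ 2 ≤ ⟪y, blockOp L L' s y⟫_ℂ := by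
  have hadj : ‖adjoint s‖ ≤ 1 := by rwa [LinearIsometryEquiv.norm_map]
  rw [inner_blockOp_apply, inner_add_inner_adjoint_eq_norm_adjoint_apply_add_sq]
  exact le_add_of_nonneg_right <| Complex.zero_le_real.mpr <|
    sub_nonneg.mpr <| norm_apply_sq_le_of_opNorm_le_one hadj _

theorem norm_fst_blockOp_apply_sq_le_inner (hs : ‖s‖ ≤ 1) (y : WithLp 2 (L' × L)) :
    (‖(blockOp L L' s y).fst‖ : ℂ) ^ 2 ≤ ⟪y, blockOp L L' s y⟫_ℂ := by
  rw [inner_blockOp_apply, inner_add_inner_adjoint_eq_norm_add_apply_sq]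
  exact le_add_of_nonneg_right <| Complex.zero_le_real.mpr <|
    sub_nonneg.mpr <| norm_apply_sq_le_of_opNorm_le_one hs _

theorem blockOp_sub_one_apply (y : WithLp 2 (L' × L)) :
    (blockOp L L' s - 1) y = WithLp.toLp 2 (s y.snd, adjoint s y.fst) := by
  apply WithLp.ofLp_injective 2
  ext <;> simp [blockOp_apply]

theorem norm_blockOp_sub_one_le : ‖blockOp L L' s - 1‖ ≤ ‖s‖ := by
  refine opNorm_le_bound _ (norm_nonneg s) fun y ↦ ?_
  refine le_of_sq_le_sq ?_ (by positivity)
  have hadj : ‖adjoint s‖ = ‖s‖ := LinearIsometryEquiv.norm_map _ s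
  calc ‖(blockOp L L' s - 1) y‖ ^ 2 = ‖s y.snd‖ ^ 2 + ‖adjoint s y.fst‖ ^ 2 := by
        rw [blockOp_sub_one_apply, WithLp.prod_norm_sq_eq_of_L2]
        rfl
    _ ≤ (‖s‖ * ‖y.snd‖) ^ 2 + (‖s‖ * ‖y.fst‖) ^ 2 := by
        gcongr
        · exact s.le_opNorm _
        · exact hadj ▸ (adjoint s).le_opNorm _
    _ = (‖s‖ * ‖y‖) ^ 2 := by rw [mul_pow, mul_pow, mul_pow, WithLp.prod_norm_sq_eq_of_L2]; ring

theorem isUnit_blockOp (hs : ‖s‖ < 1) : IsUnit (blockOp L L' s) := by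
  simpa using isUnit_one_sub_of_norm_lt_one (x := 1 - blockOp L L' s)
    (by rw [norm_sub_rev]; exact norm_blockOp_sub_one_le.trans_lt hs)

theorem blockOp_apply_inverse (hs : ‖s‖ < 1) (x : WithLp 2 (L' × L)) :
    blockOp L L' s (Ring.inverse (blockOp L L' s) x) = x := by
  rw [← mul_apply_eq_comp, Ring.mul_inverse_cancel _ (isUnit_blockOp hs), one_apply_eq_self]

end BlockOp

/-- For a strict contraction `s : L → L'`, with `S = [[I, s],[s*, I]]`, one has
`⟨S⁻¹(ℓ' ⊕ ℓ), ℓ' ⊕ ℓ⟩ ≥ ‖ℓ‖²` and `⟨S⁻¹(ℓ' ⊕ ℓ), ℓ' ⊕ ℓ⟩ ≥ ‖ℓ'‖²`. -/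
theorem blockOp_inv_inner_ge
    (L L' : Type*) [NormedAddCommGroup L] [InnerProductSpace ℂ L] [CompleteSpace L]
    [NormedAddCommGroup L'] [InnerProductSpace ℂ L'] [CompleteSpace L']
    (s : L →L[ℂ] L') (hs : ‖s‖ < 1) :
    ∀ (ℓ' : L') (ℓ : L),
      (‖ℓ‖ : ℂ) ^ 2 ≤ ⟪Ring.inverse (blockOp L L' s) ((WithLp.equiv 2 (L' × L)).symm (ℓ', ℓ)),
          (WithLp.equiv 2 (L' × L)).symm (ℓ', ℓ)⟫_ℂ ∧
      (‖ℓ'‖ : ℂ) ^ 2 ≤ ⟪Ring.inverse (blockOp L L' s) ((WithLp.equiv 2 (L' × L)).symm (ℓ', ℓ)),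
          (WithLp.equiv 2 (L' × L)).symm (ℓ', ℓ)⟫_ℂ := by
  intro ℓ' ℓ
  have hx := blockOp_apply_inverse hs ((WithLp.equiv 2 (L' × L)).symm (ℓ', ℓ))
  have hℓ := norm_snd_blockOp_apply_sq_le_inner hs.le
    (Ring.inverse (blockOp L L' s) ((WithLp.equiv 2 (L' × L)).symm (ℓ', ℓ)))
  have hℓ' := norm_fst_blockOp_apply_sq_le_inner hs.le
    (Ring.inverse (blockOp L L' s) ((WithLp.equiv 2 (L' × L)).symm (ℓ', ℓ)))
  rw [hx] at hℓ hℓ'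
  exact ⟨hℓ, hℓ'⟩
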